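/- arXiv:2505.18104 — 4 statements merged into one kernel-verified Lean document; each statement's English description precedes it below -/
import Mathlib

section
/- Let q be a nonzero complex number and let α₁, …, α₂₂ be complex numbers. For every integer n ≥ 1 define N_X(n) = 1 + qⁿ + Σ_{j=1}^{22} αⱼⁿ + q^{2n} + q^{3n} + q^{4n} and N_A(n) = 1 + Σ_{j=1}^{22} (αⱼ/q)ⁿ + q^{2n}. Then for every n ≥ 1 one has N_A(n)·(N_A(n) − 1)/2 + (qⁿ + 1)·N_A(n) + (N_A(2n) − N_A(n))/2 = (N_X(n)² − 2·(1 + q^{4n})·N_X(n) + N_X(2n)) / (2·q^{2n}). -/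
open Finset

/-! The cubic fourfold count is determined by that of its K3 category,
`N_X(n) = 1 + q^{2n} + q^{4n} + qⁿ N_A(n)`, because `qⁿ (αⱼ/q)ⁿ = αⱼⁿ`. Substituting this
relation for `n` and `2n`, both sides become `N_A(n)²/2 + qⁿ N_A(n) + N_A(2n)/2`: the
numerator on the right collapses to `q^{2n}` times twice that after completing the square
`(N_X(n) - (1 + q^{4n}))² - (1 + q^{4n})²`. -/

theorem cubic_count_eq_k3_count_mul_add {K ι : Type*} [Field K] [Fintype ι] {q : K} (hq : q ≠ 0)
    (α : ι → K) (n : ℕ) :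
    1 + q ^ n + (∑ j, α j ^ n) + q ^ (2 * n) + q ^ (3 * n) + q ^ (4 * n)
      = 1 + (q ^ n) ^ 2 + (q ^ n) ^ 4 + q ^ n * (1 + (∑ j, (α j / q) ^ n) + q ^ (2 * n)) := by
  have hα : q ^ n * ∑ j, (α j / q) ^ n = ∑ j, α j ^ n := by
    rw [Finset.mul_sum]
    exact Finset.sum_congr rfl fun j _ => by rw [div_pow, mul_div_cancel₀ _ (pow_ne_zero n hq)]
  linear_combination -hα

theorem hilbertSquare_count_eq_fano_count {K : Type*} [Field K] [NeZero (2 : K)] {x : K}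
    (hx : x ≠ 0) (A B : K) :
    A * (A - 1) / 2 + (x + 1) * A + (B - A) / 2
      = ((1 + x ^ 2 + x ^ 4 + x * A) ^ 2 - 2 * (1 + x ^ 4) * (1 + x ^ 2 + x ^ 4 + x * A)
          + (1 + (x ^ 2) ^ 2 + (x ^ 2) ^ 4 + x ^ 2 * B)) / (2 * x ^ 2) := by
  field_simp
  ring

/-- The algebraic identity underlying `Z_{A_X^{[2]}}(T) = Z_{F₁(X)}(T)`:
`N_X n` is the point count of a cubic fourfold, `N_A n` the point count of its
K3 category, the left side is the Göttsche Hilbert-square point count and the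
right side is the Galkin–Shinder formula for the Fano variety of lines. -/
theorem stmt0 (q : ℂ) (hq : q ≠ 0) (α : Fin 22 → ℂ)
    (NX NA : ℕ → ℂ)
    (hNX : ∀ n : ℕ, 1 ≤ n →
      NX n = 1 + q ^ n + (∑ j : Fin 22, (α j) ^ n) + q ^ (2 * n) + q ^ (3 * n) + q ^ (4 * n))
    (hNA : ∀ n : ℕ, 1 ≤ n →
      NA n = 1 + (∑ j : Fin 22, (α j / q) ^ n) + q ^ (2 * n)) :
    ∀ n : ℕ, 1 ≤ n →
      NA n * (NA n - 1) / 2 + (q ^ n + 1) * NA n + (NA (2 * n) - NA n) / 2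
        = (NX n ^ 2 - 2 * (1 + q ^ (4 * n)) * NX n + NX (2 * n)) / (2 * q ^ (2 * n)) := by
  have hNXA : ∀ m, 1 ≤ m → NX m = 1 + (q ^ m) ^ 2 + (q ^ m) ^ 4 + q ^ m * NA m := fun m hm => by
    rw [hNX m hm, hNA m hm, cubic_count_eq_k3_count_mul_add hq]
  intro n hn
  rw [hNXA n hn, hNXA (2 * n) (by omega), pow_mul' q 4 n, pow_mul' q 2 n]
  exact hilbertSquare_count_eq_fano_count (pow_ne_zero n hq) _ _
end

section
/- Let y and z be coprime integers. Then the integer d = 12·y·(y − z) + 20·z² is not twisted admissible; that is, there do not exist an integer k and an admissible integer d₀ with d = k²·d₀. -/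
/-- A positive integer `d` is *admissible* if `d ≡ 0` or `2 (mod 6)`, `4 ∤ d`,
`9 ∤ d`, and `p ∤ d` for every odd prime `p` with `p ≡ 2 (mod 3)`. -/
def Admissible (d : ℤ) : Prop :=
  0 < d ∧ (d % 6 = 0 ∨ d % 6 = 2) ∧ ¬ (4 ∣ d) ∧ ¬ (9 ∣ d) ∧
    ∀ p : ℤ, Prime p → Odd p → p % 3 = 2 → ¬ (p ∣ d)

/-- An integer `d` is *twisted admissible* if `d = k² · d₀` for some integer `k`
and some admissible integer `d₀`. -/
def TwistedAdmissible (d : ℤ) : Prop :=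
  ∃ (k : ℤ) (d₀ : ℤ), Admissible d₀ ∧ d = k ^ 2 * d₀

/-- For coprime integers `y, z`, the discriminant `12y(y − z) + 20z²` is not
twisted admissible. -/
theorem stmt5 (y z : ℤ) (h : IsCoprime y z) :
    ¬ TwistedAdmissible (12 * y * (y - z) + 20 * z ^ 2) := by
  rintro ⟨k, d₀, ⟨hpos, hmod, h4, h9, hp⟩, heq⟩
  set m : ℤ := 3*y^2 - 3*y*z + 5*z^2 with hm
  have hd : 12 * y * (y - z) + 20 * z ^ 2 = 4 * m := by rw [hm]; ring
  -- m is odd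
  have hmodd : ¬ ((2:ℤ) ∣ m) := by
    intro h2
    have hnb : ¬ ((2:ℤ) ∣ y ∧ (2:ℤ) ∣ z) := by
      rintro ⟨hy, hz⟩
      have := h.isUnit_of_dvd' hy hz
      rw [Int.isUnit_iff] at this
      omega
    have key : ∀ a b : ZMod 2, ¬ (a = 0 ∧ b = 0) →
        3*a^2 - 3*a*b + 5*b^2 ≠ 0 := by decide
    have hcast : ((m : ZMod 2)) = 0 := by
      have := (ZMod.intCast_zmod_eq_zero_iff_dvd m 2).mpr (by exact_mod_cast h2)
      exact this
    rw [hm] at hcast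
    push_cast at hcast
    refine key (y : ZMod 2) (z : ZMod 2) ?_ hcast
    rintro ⟨hy, hz⟩
    exact hnb ⟨by exact_mod_cast (ZMod.intCast_zmod_eq_zero_iff_dvd y 2).mp hy,
      by exact_mod_cast (ZMod.intCast_zmod_eq_zero_iff_dvd z 2).mp hz⟩
  -- d₀ = 2u with u odd
  have h2d : (2:ℤ) ∣ d₀ := by omega
  obtain ⟨u, hu⟩ := h2d
  have huodd : ¬ ((2:ℤ) ∣ u) := by
    intro ⟨v, hv⟩
    exact h4 ⟨v, by omega⟩
  have heq2 : 2 * m = k ^ 2 * u := by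
    have h4m : 4 * m = k ^ 2 * (2 * u) := by rw [← hd, heq, hu]
    linarith
  rcases Int.even_or_odd k with ⟨t, ht⟩ | ⟨t, ht⟩
  · subst ht
    apply hmodd
    refine ⟨t^2*u, ?_⟩
    have h2 : 2 * m = 2 * (2 * (t ^ 2 * u)) := by linear_combination heq2
    linarith
  · subst ht
    apply huodd
    exact ⟨m - 2*t^2*u - 2*t*u, by linear_combination -heq2⟩
end

section
/- Let B be the symmetric bilinear form on ℤ³ given by the Gram matrix G with rows (3, 4, 3), (4, 12, 2), (3, 2, 7), i.e., B(u, v) = uᵀ·G·v, and let e = (1, 0, 0). For every v = (x, y, z) ∈ ℤ³ with y and z coprime, the integer B(e, e)·B(v, v) − B(e, v)² is not twisted admissible; that is, there do not exist an integer k and an admissible integer d₀ with B(e,e)·B(v,v) − B(e,v)² = k²·d₀. -/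
open Matrix

/-- The Gram matrix of the classes `h², T, V` in `CH²(X)` of a cubic fourfold
containing a cubic scroll `T` and a Veronese surface `V` with `T·V = 2`. -/
def gramG : Matrix (Fin 3) (Fin 3) ℤ := !![3, 4, 3; 4, 12, 2; 3, 2, 7]

/-- The symmetric bilinear form `B(u,v) = uᵀ·G·v` on `ℤ³`. -/
def gramB (u v : Fin 3 → ℤ) : ℤ := u ⬝ᵥ gramG.mulVec v

/-- For every `v = (x,y,z)` with `y, z` coprime, the discriminant
`B(e,e)·B(v,v) − B(e,v)²` of the sublattice spanned by `e = (1,0,0)` and `v`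
is not twisted admissible. -/
theorem stmt8 (x y z : ℤ) (h : IsCoprime y z) :
    ¬ TwistedAdmissible
        (gramB ![1, 0, 0] ![1, 0, 0] * gramB ![x, y, z] ![x, y, z]
          - (gramB ![1, 0, 0] ![x, y, z]) ^ 2) := by
  have hval : gramB ![1, 0, 0] ![1, 0, 0] * gramB ![x, y, z] ![x, y, z]
      - (gramB ![1, 0, 0] ![x, y, z]) ^ 2 = 4 * (5*y^2 - 3*y*z + 3*z^2) := by
    simp [gramB, gramG, Matrix.mulVec, dotProduct, Fin.sum_univ_three]
    ring
  rw [hval]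
  rintro ⟨k, d₀, ⟨hpos, h6, h4, h9, hp⟩, heq⟩
  -- m := 5y² - 3yz + 3z² is odd since y, z are not both even
  have hm2 : ¬ (2 : ℤ) ∣ (5*y^2 - 3*y*z + 3*z^2) := by
    intro hdvd
    have hdvd' : ((5*y^2 - 3*y*z + 3*z^2 : ℤ) : ZMod 2) = 0 :=
      (ZMod.intCast_zmod_eq_zero_iff_dvd _ 2).mpr (by exact_mod_cast hdvd)
    push_cast at hdvd'
    have hy : ¬ ((y : ZMod 2) = 0 ∧ (z : ZMod 2) = 0) := by
      rintro ⟨hy, hz⟩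
      rw [ZMod.intCast_zmod_eq_zero_iff_dvd] at hy hz
      have := h.isUnit_of_dvd' (by exact_mod_cast hy) (by exact_mod_cast hz)
      rw [Int.isUnit_iff] at this
      omega
    revert hdvd' hy
    generalize (y : ZMod 2) = Y
    generalize (z : ZMod 2) = Z
    revert Y Z
    decide
  obtain ⟨t, ht⟩ : ∃ t, 5*y^2 - 3*y*z + 3*z^2 = 2*t + 1 := by
    refine ⟨(5*y^2 - 3*y*z + 3*z^2) / 2, ?_⟩
    omega
  -- d₀ ≡ 2 (mod 4)
  obtain ⟨s, hs⟩ : ∃ s, d₀ = 4*s + 2 := by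
    refine ⟨d₀ / 4, ?_⟩
    omega
  rw [ht, hs] at heq
  -- pass to ZMod 8
  have h8 : ((4 * (2*t + 1) : ℤ) : ZMod 8) = ((k^2 * (4*s + 2) : ℤ) : ZMod 8) := by
    rw [heq]
  push_cast at h8
  revert h8
  generalize (t : ZMod 8) = T
  generalize (k : ZMod 8) = K
  generalize (s : ZMod 8) = S
  revert T K S
  decide
end

section
/- Let f(t) = t²² − t²¹ + t²⁰ − (3/2)t¹⁹ + t¹⁸ − (3/2)t¹⁷ + (3/2)t¹⁶ − t¹⁵ + 2t¹⁴ − 2t¹³ + (3/2)t¹² − 2t¹¹ + (3/2)t¹⁰ − 2t⁹ + 2t⁸ − t⁷ + (3/2)t⁶ − (3/2)t⁵ + t⁴ − (3/2)t³ + t² − t + 1, a polynomial with rational coefficients. Then f(t) = (t − 1)²·g(t) for a polynomial g with rational coefficients such that g has degree 20, g is irreducible over ℚ, and g is not cyclotomic, i.e., g does not divide tⁿ − 1 for any integer n ≥ 1. -/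
set_option linter.unusedSectionVars false
set_option linter.dupNamespace false

open Polynomial

namespace Stmt11Aux

variable {R : Type*} [CommRing R] [DecidableEq R]

/-- little-endian coefficient list to polynomial -/
noncomputable def toP : List R → R[X]
  | [] => 0
  | a :: l => C a + X * toP l

def addL : List R → List R → List R
  | [], l => l
  | l, [] => l
  | a :: l, b :: t => (a + b) :: addL l t

def negL (l : List R) : List R := l.map (fun x => -x)
def subL (a b : List R) : List R := addL a (negL b)
def scaleL (c : R) (l : List R) : List R := l.map (fun x => c * x)

def mulL : List R → List R → List R
  | [], _ => []
  | a :: l, b => addL (scaleL a b) ((0 : R) :: mulL l b)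

def trimL : List R → List R
  | [] => []
  | a :: l =>
    match trimL l with
    | [] => if a = 0 then [] else [a]
    | b :: t => a :: b :: t

@[simp] lemma toP_nil : toP ([] : List R) = 0 := rfl
@[simp] lemma toP_cons (a : R) (l : List R) : toP (a :: l) = C a + X * toP l := rfl

lemma toP_addL (a b : List R) : toP (addL a b) = toP a + toP b := by
  induction a generalizing b with
  | nil => simp [addL]
  | cons x l ih =>
    cases b with
    | nil => simp [addL]
    | cons y t => simp [addL, ih]; ring

lemma toP_negL (l : List R) : toP (negL l) = -toP l := by
  induction l with
  | nil => simp [negL]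
  | cons x l ih => simp [negL] at ih ⊢; rw [ih]; ring

lemma toP_subL (a b : List R) : toP (subL a b) = toP a - toP b := by
  rw [subL, toP_addL, toP_negL]; ring

lemma toP_scaleL (c : R) (l : List R) : toP (scaleL c l) = C c * toP l := by
  induction l with
  | nil => simp [scaleL]
  | cons x l ih => simp [scaleL] at ih ⊢; rw [ih]; ring

lemma toP_replicate_append (k : ℕ) (l : List R) :
    toP (List.replicate k (0 : R) ++ l) = X ^ k * toP l := by
  induction k with
  | zero => simp
  | succ n ih => simp [List.replicate_succ, ih]; ring

lemma toP_mulL (a b : List R) : toP (mulL a b) = toP a * toP b := by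
  induction a with
  | nil => simp [mulL]
  | cons x l ih => simp [mulL, toP_addL, toP_scaleL, ih]; ring

lemma toP_trimL (l : List R) : toP (trimL l) = toP l := by
  induction l with
  | nil => rfl
  | cons a l ih =>
    rw [trimL]
    cases h : trimL l with
    | nil =>
      rw [h] at ih
      simp only [toP_nil] at ih
      split_ifs with ha
      · simp [ha, ← ih]
      · simp [← ih]
    | cons b t =>
      rw [h] at ih
      simp [ih]

lemma toP_coeff (l : List R) (n : ℕ) : (toP l).coeff n = l.getD n 0 := by
  induction l generalizing n with
  | nil => simp
  | cons a l ih =>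
    cases n with
    | zero => simp [coeff_C, mul_coeff_zero]
    | succ m => simp [coeff_C, coeff_X_mul, ih]

lemma toP_map {S : Type*} [CommRing S] [DecidableEq S] (φ : R →+* S) (l : List R) :
    (toP l).map φ = toP (l.map φ) := by
  induction l with
  | nil => simp
  | cons a l ih => simp [Polynomial.map_add, Polynomial.map_mul, ih]




instance : Fact (Nat.Prime 23) := ⟨by norm_num⟩

abbrev F23 := ZMod 23
abbrev LF := List F23

def mlist : LF := [2, 2, 4, 3, 4, 2, 3, 2, 5, 4, 6, 4, 5, 2, 3, 2, 4, 3, 4, 2, 2]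

def redStep (l : LF) : LF :=
  subL l (List.replicate (l.length - 21) (0 : F23) ++ scaleL (l.getLastD 0 * 12) mlist)

def reduceL : ℕ → LF → LF
  | 0, l => l
  | n + 1, l =>
    let t := trimL l
    if t.length ≤ 21 then t else reduceL n (redStep t)

def mulMod (a b : LF) : LF := reduceL 30 (mulL a b)

def pow23 (r : LF) : LF :=
  let c2 := mulMod r r
  let c4 := mulMod c2 c2
  let c5 := mulMod c4 r
  let c10 := mulMod c5 c5
  let c11 := mulMod c10 r
  let c22 := mulMod c11 c11
  mulMod c22 r

def r1 : LF := [0, 1, 2, 2, 14, 13, 13, 12, 13, 2, 15, 14, 3, 13, 13, 0, 13, 13, 14, 13, 13]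
def r2 : LF := [0, 2, 19, 3, 13, 2, 21, 19, 9, 7, 6, 17, 21, 13, 11, 15, 18, 20, 7, 19, 14]
def r3 : LF := [0, 1, 3, 3, 3, 1, 6, 1, 16, 4, 4, 21, 6, 4, 8, 9, 22, 8, 19, 9, 15]
def r4 : LF := [0, 15, 18, 14, 13, 17, 20, 15, 21, 3, 8, 17, 12, 20, 11, 16, 8, 18, 14, 7, 1]
def r5 : LF := [0, 5, 18, 7, 7, 18, 18, 5, 22, 6, 14, 5, 4, 13, 2, 7, 20, 15, 12, 1]
def r6 : LF := [0, 14, 7, 16, 21, 14, 3, 7, 15, 1, 3, 17, 5, 20, 16, 5, 20, 10, 15, 2, 15]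
def r7 : LF := [0, 12, 13, 11, 20, 1, 0, 22, 20, 7, 20, 13, 22, 7, 9, 7, 9, 20, 10, 17, 13]
def r8 : LF := [0, 19, 10, 0, 13, 11, 14, 4, 8, 5, 5, 6, 0, 4, 7, 7, 6, 14, 9, 13, 15]
def r9 : LF := [0, 9, 7, 14, 17, 10, 9, 6, 7, 7, 22, 15, 0, 18, 16, 7, 6, 16, 14, 10, 7]
def r10 : LF := [0, 22, 12, 11, 1, 11, 12, 10, 12, 22, 1, 11, 13, 11, 12, 22, 12, 11, 1, 0, 1]
def u1 : LF := [12, 11, 8, 7, 11, 7, 12, 9, 10, 18, 11, 19, 19, 17, 19, 5, 12, 17, 13, 16]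
def v1 : LF := [3, 11, 20, 1, 5, 0, 10, 0, 16, 19, 5, 2, 15, 6, 18, 17, 13, 6, 21, 17]
def u2 : LF := [12, 13, 14, 8, 20, 2, 5, 10, 17, 19, 1, 8, 10, 19, 20, 0, 4, 0, 11, 22]
def v2 : LF := [19, 20, 6, 1, 0, 3, 20, 8, 19, 16, 16, 9, 5, 2, 3, 11, 5, 19, 8, 10]
def u3 : LF := [12, 11, 18, 3, 5, 3, 7, 3, 18, 1, 6, 20, 21, 19, 18, 9, 21, 13, 19, 18]
def v3 : LF := [3, 10, 15, 16, 15, 15, 19, 1, 15, 14, 13, 21, 21, 20, 11, 12, 19, 3, 10, 16]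
def u4 : LF := [12, 11, 8, 19, 4, 18, 11, 16, 0, 0, 9, 18, 17, 1, 17, 6, 21, 22, 22, 11]
def v4 : LF := [0, 7, 11, 2, 19, 13, 4, 0, 14, 10, 5, 16, 11, 5, 22, 16, 13, 20, 19, 1]
def u5 : LF := [12, 21, 21, 7, 17, 9, 9, 11, 18, 2, 1, 17, 13, 6, 9, 2, 2, 15, 16]
def v5 : LF := [18, 1, 12, 13, 5, 18, 0, 0, 11, 3, 4, 18, 11, 8, 14, 19, 11, 14, 0, 14]
def u6 : LF := [12, 9, 5, 20, 7, 3, 7, 15, 17, 15, 16, 20, 17, 0, 2, 8, 17, 0, 9, 3]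
def v6 : LF := [18, 11, 5, 14, 10, 3, 14, 21, 11, 4, 9, 11, 22, 7, 4, 3, 11, 2, 19, 18]
def u7 : LF := [12, 8, 17, 15, 8, 0, 17, 18, 11, 21, 20, 17, 10, 8, 3, 7, 0, 14, 20, 1]
def v7 : LF := [11, 22, 20, 22, 3, 5, 2, 18, 14, 1, 20, 10, 14, 16, 6, 2, 18, 9, 5, 14]
def u8 : LF := [12, 4, 21, 21, 22, 5, 0, 22, 4, 21, 13, 15, 6, 11, 13, 6, 17, 9, 6, 20]
def v8 : LF := [11, 14, 0, 1, 5, 19, 9, 8, 22, 2, 8, 1, 9, 18, 5, 16, 4, 9, 6, 5]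
def u9 : LF := [12, 0, 9, 18, 15, 0, 8, 7, 3, 11, 13, 2, 2, 6, 1, 2, 0, 18, 14, 20]
def v9 : LF := [20, 3, 0, 14, 12, 17, 16, 5, 10, 8, 10, 4, 0, 11, 20, 6, 4, 15, 13, 14]
def u10 : LF := [12, 2, 8, 20, 21, 18, 3, 20, 2, 7, 12, 5, 10, 6, 15, 16, 17, 11, 7, 17]
def v10 : LF := [14, 3, 7, 0, 17, 13, 3, 9, 3, 7, 21, 22, 9, 6, 18, 2, 11, 22, 21, 12]

noncomputable def mpoly : F23[X] := toP mlist

noncomputable def piM : F23[X] →+* (F23[X] ⧸ Ideal.span {mpoly}) :=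
  Ideal.Quotient.mk (Ideal.span {mpoly})

lemma piM_mlist : piM (toP mlist) = 0 := by
  rw [piM, Ideal.Quotient.eq_zero_iff_mem]
  exact Ideal.mem_span_singleton_self _

lemma piM_redStep (l : LF) : piM (toP (redStep l)) = piM (toP l) := by
  rw [redStep, toP_subL, toP_replicate_append, toP_scaleL, map_sub, map_mul, map_mul,
    piM_mlist, mul_zero, mul_zero, sub_zero]

lemma piM_reduceL (n : ℕ) (l : LF) : piM (toP (reduceL n l)) = piM (toP l) := by
  induction n generalizing l with
  | zero => rfl
  | succ k ih =>
    rw [reduceL]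
    by_cases h : (trimL l).length ≤ 21
    · simp only [h, if_true, toP_trimL]
    · simp only [h, if_false, ih, piM_redStep, toP_trimL]

lemma piM_mulMod (a b : LF) : piM (toP (mulMod a b)) = piM (toP a) * piM (toP b) := by
  rw [mulMod, piM_reduceL, toP_mulL, map_mul]

lemma piM_pow23 (r : LF) : piM (toP (pow23 r)) = piM (toP r) ^ 23 := by
  rw [pow23]
  simp only [piM_mulMod]
  ring

lemma piM_step {r r' : LF} {k k' : ℕ} (hst : pow23 r = r')
    (hr : piM (toP r) = piM X ^ k) (hk : k * 23 = k') :
    piM (toP r') = piM X ^ k' := by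
  rw [← hst, piM_pow23, hr, ← pow_mul, hk]

lemma toP_X : toP ([0, 1] : LF) = X := by
  simp [toP]

set_option maxRecDepth 40000 in
lemma st1 : pow23 [0, 1] = r1 := by decide
set_option maxRecDepth 40000 in
lemma st2 : pow23 r1 = r2 := by decide
set_option maxRecDepth 40000 in
lemma st3 : pow23 r2 = r3 := by decide
set_option maxRecDepth 40000 in
lemma st4 : pow23 r3 = r4 := by decide
set_option maxRecDepth 40000 in
lemma st5 : pow23 r4 = r5 := by decide
set_option maxRecDepth 40000 in
lemma st6 : pow23 r5 = r6 := by decide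
set_option maxRecDepth 40000 in
lemma st7 : pow23 r6 = r7 := by decide
set_option maxRecDepth 40000 in
lemma st8 : pow23 r7 = r8 := by decide
set_option maxRecDepth 40000 in
lemma st9 : pow23 r8 = r9 := by decide
set_option maxRecDepth 40000 in
lemma st10 : pow23 r9 = r10 := by decide

lemma piM_r0 : piM (toP ([0, 1] : LF)) = piM X ^ 1 := by rw [toP_X, pow_one]
lemma piM_r1 : piM (toP r1) = piM X ^ 23 ^ 1 := piM_step st1 piM_r0 (by norm_num)
lemma piM_r2 : piM (toP r2) = piM X ^ 23 ^ 2 := piM_step st2 piM_r1 (by norm_num)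
lemma piM_r3 : piM (toP r3) = piM X ^ 23 ^ 3 := piM_step st3 piM_r2 (by norm_num)
lemma piM_r4 : piM (toP r4) = piM X ^ 23 ^ 4 := piM_step st4 piM_r3 (by norm_num)
lemma piM_r5 : piM (toP r5) = piM X ^ 23 ^ 5 := piM_step st5 piM_r4 (by norm_num)
lemma piM_r6 : piM (toP r6) = piM X ^ 23 ^ 6 := piM_step st6 piM_r5 (by norm_num)
lemma piM_r7 : piM (toP r7) = piM X ^ 23 ^ 7 := piM_step st7 piM_r6 (by norm_num)
lemma piM_r8 : piM (toP r8) = piM X ^ 23 ^ 8 := piM_step st8 piM_r7 (by norm_num)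
lemma piM_r9 : piM (toP r9) = piM X ^ 23 ^ 9 := piM_step st9 piM_r8 (by norm_num)
lemma piM_r10 : piM (toP r10) = piM X ^ 23 ^ 10 := piM_step st10 piM_r9 (by norm_num)

lemma dvd_claim {r : LF} {d : ℕ} (hr : piM (toP r) = piM X ^ 23 ^ d) :
    mpoly ∣ X ^ 23 ^ d - toP r := by
  rw [← Ideal.mem_span_singleton, ← Ideal.Quotient.eq_zero_iff_mem]
  show piM _ = 0
  rw [map_sub, map_pow, hr, sub_self]

lemma cop_claim {r u v : LF}
    (h : trimL (addL (mulL u mlist) (mulL v (subL r [0, 1]))) = [1]) :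
    IsCoprime mpoly (toP r - X) := by
  refine ⟨toP u, toP v, ?_⟩
  have := congrArg (toP (R := F23)) h
  rw [toP_trimL, toP_addL, toP_mulL, toP_mulL, toP_subL, toP_X] at this
  rw [mpoly, this]
  simp [toP]


theorem irr_dvd_X_pow_card (p : ℕ) [Fact p.Prime] {h : (ZMod p)[X]} (hi : Irreducible h) :
    h ∣ X ^ p ^ h.natDegree - X := by
  haveI : Fact (Irreducible h) := ⟨hi⟩
  have h0 : h ≠ 0 := hi.ne_zero
  haveI : Module.Finite (ZMod p) (AdjoinRoot h) := (AdjoinRoot.powerBasis h0).finite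
  haveI : Finite (AdjoinRoot h) := Module.finite_of_finite (ZMod p)
  haveI : Fintype (AdjoinRoot h) := Fintype.ofFinite _
  have hcard : Fintype.card (AdjoinRoot h) = p ^ h.natDegree := by
    rw [Module.card_eq_pow_finrank (K := ZMod p), ZMod.card, (AdjoinRoot.powerBasis h0).finrank]
    rfl
  rw [← AdjoinRoot.mk_eq_zero, map_sub, map_pow, AdjoinRoot.mk_X, ← hcard,
    FiniteField.pow_card, sub_self]

lemma mpoly_coeff (n : ℕ) : mpoly.coeff n = mlist.getD n 0 := toP_coeff _ _

lemma mpoly_natDegree : mpoly.natDegree = 20 := by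
  have h1 : mpoly.natDegree ≤ 20 := by
    rw [natDegree_le_iff_coeff_eq_zero]
    intro N hN
    rw [mpoly_coeff]
    apply List.getD_eq_default
    show mlist.length ≤ N
    rw [show mlist.length = 21 from rfl]
    omega
  have h2 : 20 ≤ mpoly.natDegree := by
    apply le_natDegree_of_ne_zero
    rw [mpoly_coeff]
    decide
  omega

lemma mpoly_ne_zero : mpoly ≠ 0 := by
  intro h
  have h2 := mpoly_natDegree
  rw [h, natDegree_zero] at h2
  exact absurd h2 (by norm_num)

theorem mpoly_irreducible : Irreducible mpoly := by
  constructor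
  · intro hu
    have := natDegree_eq_zero_of_isUnit hu
    rw [mpoly_natDegree] at this
    omega
  · intro a b hab
    by_contra hcon
    push_neg at hcon
    obtain ⟨ha, hb⟩ := hcon
    have ha0 : a ≠ 0 := by rintro rfl; rw [zero_mul] at hab; exact mpoly_ne_zero hab
    have hb0 : b ≠ 0 := by rintro rfl; rw [mul_zero] at hab; exact mpoly_ne_zero hab
    have hsum : a.natDegree + b.natDegree = 20 := by
      rw [← mpoly_natDegree, hab, natDegree_mul ha0 hb0]
    have key : ∀ c : F23[X], c ∣ mpoly → c ≠ 0 → ¬IsUnit c → c.natDegree ≤ 10 → False := by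
      intro c hcdvd hc0 hcu hc10
      obtain ⟨h, hirr, hhc⟩ := WfDvdMonoid.exists_irreducible_factor hcu hc0
      have hd1 : 1 ≤ h.natDegree := by
        rcases Nat.eq_zero_or_pos h.natDegree with hz | hpos
        · exfalso
          have hC := eq_C_of_natDegree_eq_zero hz
          have hc00 : h.coeff 0 ≠ 0 := by
            intro hcc; rw [hcc, map_zero] at hC; exact hirr.ne_zero hC
          exact hirr.not_isUnit (hC ▸ isUnit_C.mpr (isUnit_iff_ne_zero.mpr hc00))
        · exact hpos
      have hd10 : h.natDegree ≤ 10 :=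
        le_trans (natDegree_le_of_dvd hhc hc0) hc10
      have hdvdm : h ∣ mpoly := hhc.trans hcdvd
      have hdvdX : h ∣ X ^ 23 ^ h.natDegree - X := irr_dvd_X_pow_card 23 hirr
      have final : ∀ (r u v : LF), piM (toP r) = piM X ^ 23 ^ h.natDegree →
          trimL (addL (mulL u mlist) (mulL v (subL r [0, 1]))) = [1] → False := by
        intro r u v hr hcert
        have h1 : h ∣ toP r - X := by
          have d1 := dvd_claim hr
          have : toP r - X = (X ^ 23 ^ h.natDegree - X) - (X ^ 23 ^ h.natDegree - toP r) := by
            ring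
          rw [this]
          exact dvd_sub hdvdX (hdvdm.trans d1)
        exact hirr.not_isUnit ((cop_claim hcert).isUnit_of_dvd' hdvdm h1)
      set d := h.natDegree with hd
      interval_cases d
      · exact final r1 u1 v1 piM_r1 (by decide)
      · exact final r2 u2 v2 piM_r2 (by decide)
      · exact final r3 u3 v3 piM_r3 (by decide)
      · exact final r4 u4 v4 piM_r4 (by decide)
      · exact final r5 u5 v5 piM_r5 (by decide)
      · exact final r6 u6 v6 piM_r6 (by decide)
      · exact final r7 u7 v7 piM_r7 (by decide)
      · exact final r8 u8 v8 piM_r8 (by decide)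
      · exact final r9 u9 v9 piM_r9 (by decide)
      · exact final r10 u10 v10 piM_r10 (by decide)
    have ha1 : 1 ≤ a.natDegree := by
      rcases Nat.eq_zero_or_pos a.natDegree with hz | hpos
      · exfalso
        have hC := eq_C_of_natDegree_eq_zero hz
        have hc00 : a.coeff 0 ≠ 0 := by
          intro hcc; rw [hcc, map_zero] at hC; exact ha0 hC
        exact ha (hC ▸ isUnit_C.mpr (isUnit_iff_ne_zero.mpr hc00))
      · exact hpos
    rcases le_or_gt a.natDegree 10 with h10 | h10
    · exact key a ⟨b, hab⟩ ha0 ha h10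
    · exact key b ⟨a, by rw [hab, mul_comm]⟩ hb0 hb (by omega)




def Tlist : List ℤ := [2, 2, 4, 3, 4, 2, 3, 2, 5, 4, 6, 4, 5, 2, 3, 2, 4, 3, 4, 2, 2]

noncomputable def T : ℤ[X] := toP Tlist

lemma Tlist_map : Tlist.map (Int.castRingHom F23) = mlist := by decide

lemma T_map_zmod : T.map (Int.castRingHom F23) = mpoly := by
  rw [T, toP_map, Tlist_map, mpoly]

lemma T_coeff (n : ℕ) : T.coeff n = Tlist.getD n 0 := toP_coeff _ _

lemma T_natDegree : T.natDegree = 20 := by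
  have h1 : T.natDegree ≤ 20 := by
    rw [natDegree_le_iff_coeff_eq_zero]
    intro N hN
    rw [T_coeff]
    apply List.getD_eq_default
    show Tlist.length ≤ N
    rw [show Tlist.length = 21 from rfl]
    omega
  have h2 : 20 ≤ T.natDegree := by
    apply le_natDegree_of_ne_zero
    rw [T_coeff]
    decide
  omega

lemma T_primitive : T.IsPrimitive := by
  intro r hr
  rw [C_dvd_iff_dvd_coeff] at hr
  have h2 : r ∣ 2 := by have := hr 0; rwa [T_coeff] at this
  have h3 : r ∣ 3 := by have := hr 3; rwa [T_coeff] at this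
  have : r ∣ 1 := (dvd_sub h3 h2)
  exact isUnit_of_dvd_one this

theorem T_irreducible : Irreducible T := by
  have hmi : Irreducible (T.map (Int.castRingHom F23)) := T_map_zmod ▸ mpoly_irreducible
  have hT0 : T ≠ 0 := by
    intro h
    rw [h, Polynomial.map_zero] at hmi
    exact hmi.ne_zero rfl
  have key : ∀ a b : ℤ[X], T = a * b → IsUnit (a.map (Int.castRingHom F23)) → IsUnit a := by
    intro a b hab hu
    have ha0 : a ≠ 0 := by rintro rfl; rw [zero_mul] at hab; exact hT0 hab
    have hb0 : b ≠ 0 := by rintro rfl; rw [mul_zero] at hab; exact hT0 hab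
    have hmb0 : b.map (Int.castRingHom F23) ≠ 0 := by
      intro h
      have : T.map (Int.castRingHom F23) = 0 := by
        rw [hab, Polynomial.map_mul, h, mul_zero]
      exact hmi.ne_zero this
    have hma0 : a.map (Int.castRingHom F23) ≠ 0 := hu.ne_zero
    have hdm : (a.map (Int.castRingHom F23)).natDegree +
        (b.map (Int.castRingHom F23)).natDegree = 20 := by
      rw [← natDegree_mul hma0 hmb0, ← Polynomial.map_mul, ← hab,
        T_map_zmod, mpoly_natDegree]
    have hua : (a.map (Int.castRingHom F23)).natDegree = 0 := natDegree_eq_zero_of_isUnit hu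
    have hbz : (b.map (Int.castRingHom F23)).natDegree ≤ b.natDegree := natDegree_map_le
    have hdz : a.natDegree + b.natDegree = 20 := by
      rw [← T_natDegree, hab, natDegree_mul ha0 hb0]
    have haz : a.natDegree = 0 := by omega
    have hC := eq_C_of_natDegree_eq_zero haz
    have : C (a.coeff 0) ∣ T := by rw [hab, ← hC]; exact dvd_mul_right a b
    exact hC ▸ isUnit_C.mpr (T_primitive _ this)
  constructor
  · intro hu
    exact hmi.not_isUnit (hu.map (mapRingHom (Int.castRingHom F23)))
  · intro a b hab
    have h1 : T.map (Int.castRingHom F23) =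
        a.map (Int.castRingHom F23) * b.map (Int.castRingHom F23) := by
      rw [hab, Polynomial.map_mul]
    rcases hmi.isUnit_or_isUnit h1 with hu | hu
    · exact Or.inl (key a b hab hu)
    · exact Or.inr (key b a (by rw [hab, mul_comm]) hu)




noncomputable def gA : ℚ[X] :=
  X ^ 20 + X ^ 19 + 2 * X ^ 18 + 3 * X ^ 17 + 5 * X ^ 16 + 7 * X ^ 15 + 9 * X ^ 14
    + 10 * X ^ 13 + 13 * X ^ 12 + 14 * X ^ 11 + 15 * X ^ 10 + 14 * X ^ 9 + 13 * X ^ 8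
    + 10 * X ^ 7 + 9 * X ^ 6 + 7 * X ^ 5 + 5 * X ^ 4 + 3 * X ^ 3 + 2 * X ^ 2 + X + 1

noncomputable def gB : ℚ[X] :=
  X ^ 17 + 2 * X ^ 16 + 4 * X ^ 15 + 5 * X ^ 14 + 6 * X ^ 13 + 7 * X ^ 12 + 8 * X ^ 11
    + 8 * X ^ 10 + 8 * X ^ 9 + 7 * X ^ 8 + 6 * X ^ 7 + 5 * X ^ 6 + 4 * X ^ 5
    + 2 * X ^ 4 + X ^ 3

noncomputable def gQ : ℚ[X] := gA - C (3 / 2) * gB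

lemma hc32 : (C (3 / 2 : ℚ)) * 2 = (3 : ℚ[X]) := by
  rw [← map_ofNat (C : ℚ →+* ℚ[X]) 2, ← map_ofNat (C : ℚ →+* ℚ[X]) 3, ← C_mul]
  norm_num

lemma T_map_rat : T.map (Int.castRingHom ℚ) = C 2 * gQ := by
  rw [T, toP_map]
  simp only [Tlist, List.map_cons, List.map_nil, toP_cons, toP_nil, gQ, gA, gB]
  push_cast
  simp only [map_ofNat]
  linear_combination (X ^ 17 + 2 * X ^ 16 + 4 * X ^ 15 + 5 * X ^ 14 + 6 * X ^ 13 + 7 * X ^ 12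
    + 8 * X ^ 11 + 8 * X ^ 10 + 8 * X ^ 9 + 7 * X ^ 8 + 6 * X ^ 7 + 5 * X ^ 6 + 4 * X ^ 5
    + 2 * X ^ 4 + X ^ 3 : ℚ[X]) * hc32

lemma gQ_degree : gQ.degree = 20 := by
  unfold gQ gA gB
  compute_degree!

lemma gQ_monic : gQ.Monic := by
  unfold gQ gA gB
  monicity!

lemma gQ_eval_one : gQ.eval 1 = 34 := by
  simp [gQ, gA, gB]
  norm_num

theorem gQ_irreducible : Irreducible gQ := by
  have hQ : Irreducible (T.map (Int.castRingHom ℚ)) :=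
    (IsPrimitive.Int.irreducible_iff_irreducible_map_cast T_primitive).mp T_irreducible
  rw [T_map_rat] at hQ
  exact (associated_unit_mul_left gQ (C (2 : ℚ)) (isUnit_C.mpr (by norm_num))).irreducible hQ

theorem gQ_not_cyclotomic : ∀ n : ℕ, 1 ≤ n → ¬ (gQ ∣ (X ^ n - 1)) := by
  intro n hn hdvd
  rw [← prod_cyclotomic_eq_X_pow_sub_one (by omega) ℚ] at hdvd
  have hprime : Prime gQ := (UniqueFactorizationMonoid.irreducible_iff_prime).mp gQ_irreducible
  obtain ⟨d, hdmem, hgd⟩ := hprime.exists_mem_finset_dvd hdvd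
  have hd0 : 0 < d := Nat.pos_of_mem_divisors hdmem
  have heq : gQ = cyclotomic d ℚ :=
    eq_of_monic_of_associated gQ_monic (cyclotomic.monic d ℚ)
      (gQ_irreducible.associated_of_dvd (cyclotomic.irreducible_rat hd0) hgd)
  have h1 : (cyclotomic d ℚ).eval 1 = 34 := by rw [← heq]; exact gQ_eval_one
  by_cases hpp : ∃ p k : ℕ, p.Prime ∧ p ^ k = d
  · obtain ⟨p, k, hp, hpk⟩ := hpp
    cases k with
    | zero =>
      rw [pow_zero] at hpk
      rw [← hpk, cyclotomic_one] at h1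
      norm_num at h1
    | succ k' =>
      haveI : Fact p.Prime := ⟨hp⟩
      rw [← hpk, eval_one_cyclotomic_prime_pow] at h1
      have hp34 : p = 34 := by exact_mod_cast h1
      rw [hp34] at hp
      norm_num at hp
  · push_neg at hpp
    rw [eval_one_cyclotomic_not_prime_pow (fun {p} hp k => hpp p k hp)] at h1
    norm_num at h1

end Stmt11Aux

open Stmt11Aux in
/-- The primitive Weil polynomial of an explicit smooth cubic fourfold over `F₂`
factors as `(t − 1)²·g(t)` with `g` irreducible over `ℚ` of degree 20 and not
cyclotomic (it divides no `tⁿ − 1`). -/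
theorem stmt11 (f : Polynomial ℚ)
    (hf : f = X ^ 22 - X ^ 21 + X ^ 20 - C (3 / 2) * X ^ 19 + X ^ 18
        - C (3 / 2) * X ^ 17 + C (3 / 2) * X ^ 16 - X ^ 15 + 2 * X ^ 14
        - 2 * X ^ 13 + C (3 / 2) * X ^ 12 - 2 * X ^ 11 + C (3 / 2) * X ^ 10
        - 2 * X ^ 9 + 2 * X ^ 8 - X ^ 7 + C (3 / 2) * X ^ 6 - C (3 / 2) * X ^ 5
        + X ^ 4 - C (3 / 2) * X ^ 3 + X ^ 2 - X + 1) :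
    ∃ g : Polynomial ℚ, f = (X - 1) ^ 2 * g ∧ g.degree = 20 ∧ Irreducible g ∧
      ∀ n : ℕ, 1 ≤ n → ¬ (g ∣ (X ^ n - 1)) := by
  refine ⟨gQ, ?_, gQ_degree, gQ_irreducible, gQ_not_cyclotomic⟩
  rw [hf]
  unfold gQ gA gB
  ring
end
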